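/- Let G be a finite simple graph, s ≥ 1 an integer, σ a linear ordering of its vertices, and k ≥ 1. Then G contains an s-club of size k if and only if there exists a vertex v such that the induced subgraph G[Q_s^σ[v]] contains an s-club of size k. -/

import Mathlib

/-- `C` is an `s`-club in `G`: any two vertices of `C` have distance at most `s`
in the induced subgraph `G[C]`. -/
def IsSClub {V : Type*} (G : SimpleGraph V) (s : ℕ) (C : Set V) : Prop :=
  ∀ u v : C, (G.induce C).edist u v ≤ s

/-- The `x`-th neighborhood of `v` in `G`: vertices `u` with `1 ≤ dist_G(u,v) ≤ x`. -/
def xNbhd {V : Type*} (G : SimpleGraph V) (x : ℕ) (v : V) : Set V :=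
  {u | 1 ≤ G.edist u v ∧ G.edist u v ≤ x}

/-- The set of vertices appearing at or after `v` in the ordering `σ`. -/
def laterSet {V : Type*} (σ : V → ℕ) (v : V) : Set V := {u | σ v ≤ σ u}

theorem mem_laterSet_self {V : Type*} (σ : V → ℕ) (v : V) : v ∈ laterSet σ v :=
  le_refl (σ v)

/-- `Q_x^σ[v]`: the vertex `v` together with the `x`-th neighborhood of `v` in the
subgraph induced by `v` and the vertices appearing after `v` in the ordering `σ`. -/
def Qx {V : Type*} (G : SimpleGraph V) (σ : V → ℕ) (x : ℕ) (v : V) : Set V :=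
  insert v (Subtype.val ''
    (xNbhd (G.induce (laterSet σ v)) x ⟨v, mem_laterSet_self σ v⟩))

/-!
A club `C` with `v` its `σ`-least vertex lives inside the vertices at or after `v`, and
distances in `G[C]` dominate those in that larger induced subgraph. Hence every vertex of `C`
is within distance `s` of `v` there, i.e. `C ⊆ Q_s^σ[v]`. Conversely, clubs of `G[Q]` are
clubs of `G`, because `G[Q][C] ≅ G[C]`.
-/

namespace SimpleGraph

variable {V W : Type*} {G : SimpleGraph V} {H : SimpleGraph W}

lemma Hom.edist_le (f : G →g H) (u v : V) : H.edist (f u) (f v) ≤ G.edist u v := by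
  rcases eq_or_ne (G.edist u v) ⊤ with h | h
  · simp [h]
  · obtain ⟨p, hp⟩ := exists_walk_of_edist_ne_top h
    calc H.edist (f u) (f v) ≤ (p.map f).length := SimpleGraph.edist_le _
      _ = p.length := by rw [Walk.length_map]
      _ = G.edist u v := hp

lemma Iso.edist_eq (f : G ≃g H) (u v : V) : H.edist (f u) (f v) = G.edist u v :=
  le_antisymm (f.toHom.edist_le u v) (by simpa using f.symm.toHom.edist_le (f u) (f v))

lemma edist_induce_le_of_subset {A B : Set V} (hAB : A ⊆ B) (u v : A) :
    (G.induce B).edist ⟨u, hAB u.2⟩ ⟨v, hAB v.2⟩ ≤ (G.induce A).edist u v :=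
  (induceHom Hom.id hAB).edist_le u v

noncomputable def induceInduceIso (G : SimpleGraph V) (A : Set V) (B : Set A) :
    (G.induce A).induce B ≃g G.induce (Subtype.val '' B) where
  toEquiv := Equiv.Set.image Subtype.val B Subtype.val_injective
  map_rel_iff' := Iff.rfl

end SimpleGraph

open SimpleGraph

lemma isSClub_induce_iff {V : Type*} (G : SimpleGraph V) (s : ℕ) (A : Set V) (B : Set A) :
    IsSClub (G.induce A) s B ↔ IsSClub G s (Subtype.val '' B) := by
  let e := induceInduceIso G A B
  constructor
  · intro h u w
    obtain ⟨u', rfl⟩ := e.surjective u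
    obtain ⟨w', rfl⟩ := e.surjective w
    exact (e.edist_eq u' w').trans_le (h u' w')
  · intro h u w
    exact e.edist_eq u w ▸ h (e u) (e w)

lemma exists_isSClub_induce_ncard_iff {V : Type*} (G : SimpleGraph V) (s k : ℕ) (A : Set V) :
    (∃ C : Set A, IsSClub (G.induce A) s C ∧ C.ncard = k) ↔
      ∃ C ⊆ A, IsSClub G s C ∧ C.ncard = k := by
  constructor
  · rintro ⟨C, hC, rfl⟩
    exact ⟨_, Subtype.coe_image_subset A C, (isSClub_induce_iff G s A C).mp hC,
      Set.ncard_image_of_injective _ Subtype.val_injective⟩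
  · rintro ⟨C, hCA, hC, rfl⟩
    have hC' : Subtype.val '' (Subtype.val ⁻¹' C : Set A) = C := by
      rw [Subtype.image_preimage_coe, Set.inter_eq_self_of_subset_right hCA]
    refine ⟨Subtype.val ⁻¹' C, (isSClub_induce_iff G s A _).mpr (hC'.symm ▸ hC), ?_⟩
    rw [← Set.ncard_image_of_injective _ Subtype.val_injective, hC']

lemma IsSClub.subset_Qx {V : Type*} {G : SimpleGraph V} {s : ℕ} {C : Set V} (hC : IsSClub G s C)
    (σ : V → ℕ) {v : V} (hv : v ∈ C) (hmin : ∀ u ∈ C, σ v ≤ σ u) : C ⊆ Qx G σ s v := by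
  intro u hu
  obtain rfl | huv := eq_or_ne u v
  · exact Set.mem_insert _ _
  refine Set.mem_insert_of_mem _ ⟨⟨u, hmin u hu⟩, ⟨?_, ?_⟩, rfl⟩
  · exact Order.one_le_iff_pos.mpr (edist_pos_of_ne (by simpa [Subtype.ext_iff] using huv))
  · exact (edist_induce_le_of_subset (G := G) hmin ⟨u, hu⟩ ⟨v, hv⟩).trans (hC ⟨u, hu⟩ ⟨v, hv⟩)

theorem stmt_8_general {V : Type*} (G : SimpleGraph V) (s : ℕ)
    (σ : V → ℕ) (k : ℕ) (hk : 1 ≤ k) :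
    (∃ C : Set V, IsSClub G s C ∧ C.ncard = k) ↔
    (∃ v : V, ∃ C : Set (Qx G σ s v),
      IsSClub (G.induce (Qx G σ s v)) s C ∧ C.ncard = k) := by
  simp only [exists_isSClub_induce_ncard_iff]
  constructor
  · rintro ⟨C, hC, rfl⟩
    have hfin : C.Finite := Set.finite_of_ncard_pos (by omega)
    have hne : C.Nonempty := Set.nonempty_of_ncard_ne_zero (by omega)
    obtain ⟨v, hv, hmin⟩ := Set.exists_min_image C σ hfin hne
    exact ⟨v, C, hC.subset_Qx σ hv hmin, hC, rfl⟩
  · rintro ⟨v, C, -, hC, rfl⟩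
    exact ⟨C, hC, rfl⟩

theorem stmt_8 {V : Type*} [Fintype V] (G : SimpleGraph V) (s : ℕ) (hs : 1 ≤ s)
    (σ : V → ℕ) (hσ : Function.Injective σ) (k : ℕ) (hk : 1 ≤ k) :
    (∃ C : Set V, IsSClub G s C ∧ C.ncard = k) ↔
    (∃ v : V, ∃ C : Set (Qx G σ s v),
      IsSClub (G.induce (Qx G σ s v)) s C ∧ C.ncard = k) :=
  stmt_8_general G s σ k hk
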